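/- Let M →^R A be a relative Rota-Baxter algebra, (N →^S B, l, r) a bimodule over it, and let M̂ →^{R̂} Â be an abelian extension of M →^R A by the 2-term chain complex N →^S B with section (s, s̄). Define α(a, a') := s(a)·_{Â} s(a') − s(a·a'), β(a, m) := s(a)·_{M̂} s̄(m) − s̄(a·_M m), β(m, a) := s̄(m)·_{M̂} s(a) − s̄(m·_M a), and γ(m) := R̂(s̄(m)) − s(R(m)). Then (α, β, γ) is a 2-cocycle: δ_rRB(α, β, γ) = 0. -/

import Mathlib

/-!
The first four components of `δ_rRB(α, β, γ)` are instances of one computation: for any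
associativity-type law holding both upstairs and downstairs, the defect
`μ (σ x) (σ y) - σ (ν x y)` of a section satisfies the coboundary identity, since after
expanding the defects the associativity laws cancel the terms in pairs.

In the Rota-Baxter component, the Rota-Baxter identities of `R̂` and `R` reduce everything to
`-γ(m₁) γ(m₂)`. This vanishes because `γ` takes values in the kernel of `p`, which is `i(B)`,
and `i(B)` has zero product.
-/

section

variable {K : Type*} [CommSemiring K]

def mulDefect {X₁ X₂ X₁₂ Y₁ Y₂ Y₁₂ : Type*}
    [AddCommGroup X₁] [Module K X₁] [AddCommGroup X₂] [Module K X₂]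
    [AddCommGroup X₁₂] [Module K X₁₂] [AddCommGroup Y₁] [Module K Y₁]
    [AddCommGroup Y₂] [Module K Y₂] [AddCommGroup Y₁₂] [Module K Y₁₂]
    (μ : Y₁ →ₗ[K] Y₂ →ₗ[K] Y₁₂) (ν : X₁ →ₗ[K] X₂ →ₗ[K] X₁₂)
    (σ₁ : X₁ → Y₁) (σ₂ : X₂ → Y₂) (σ₁₂ : X₁₂ → Y₁₂) (x₁ : X₁) (x₂ : X₂) : Y₁₂ :=
  μ (σ₁ x₁) (σ₂ x₂) - σ₁₂ (ν x₁ x₂)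

theorem mulDefect_cocycle {X₁ X₂ X₃ X₁₂ X₂₃ X₁₂₃ Y₁ Y₂ Y₃ Y₁₂ Y₂₃ Y₁₂₃ : Type*}
    [AddCommGroup X₁] [Module K X₁] [AddCommGroup X₂] [Module K X₂]
    [AddCommGroup X₃] [Module K X₃] [AddCommGroup X₁₂] [Module K X₁₂]
    [AddCommGroup X₂₃] [Module K X₂₃] [AddCommGroup X₁₂₃] [Module K X₁₂₃]
    [AddCommGroup Y₁] [Module K Y₁] [AddCommGroup Y₂] [Module K Y₂]
    [AddCommGroup Y₃] [Module K Y₃] [AddCommGroup Y₁₂] [Module K Y₁₂]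
    [AddCommGroup Y₂₃] [Module K Y₂₃] [AddCommGroup Y₁₂₃] [Module K Y₁₂₃]
    {μ₁₂ : Y₁ →ₗ[K] Y₂ →ₗ[K] Y₁₂} {μ₂₃ : Y₂ →ₗ[K] Y₃ →ₗ[K] Y₂₃}
    {μ₁₂₃ : Y₁₂ →ₗ[K] Y₃ →ₗ[K] Y₁₂₃} {μ₁₂₃' : Y₁ →ₗ[K] Y₂₃ →ₗ[K] Y₁₂₃}
    {ν₁₂ : X₁ →ₗ[K] X₂ →ₗ[K] X₁₂} {ν₂₃ : X₂ →ₗ[K] X₃ →ₗ[K] X₂₃}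
    {ν₁₂₃ : X₁₂ →ₗ[K] X₃ →ₗ[K] X₁₂₃} {ν₁₂₃' : X₁ →ₗ[K] X₂₃ →ₗ[K] X₁₂₃}
    {σ₁ : X₁ → Y₁} {σ₂ : X₂ → Y₂} {σ₃ : X₃ → Y₃}
    {σ₁₂ : X₁₂ → Y₁₂} {σ₂₃ : X₂₃ → Y₂₃} {σ₁₂₃ : X₁₂₃ → Y₁₂₃}
    (hμ : ∀ y₁ y₂ y₃, μ₁₂₃ (μ₁₂ y₁ y₂) y₃ = μ₁₂₃' y₁ (μ₂₃ y₂ y₃))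
    (hν : ∀ x₁ x₂ x₃, ν₁₂₃ (ν₁₂ x₁ x₂) x₃ = ν₁₂₃' x₁ (ν₂₃ x₂ x₃)) :
    ∀ x₁ x₂ x₃,
      μ₁₂₃' (σ₁ x₁) (mulDefect μ₂₃ ν₂₃ σ₂ σ₃ σ₂₃ x₂ x₃)
        - mulDefect μ₁₂₃ ν₁₂₃ σ₁₂ σ₃ σ₁₂₃ (ν₁₂ x₁ x₂) x₃
        + mulDefect μ₁₂₃' ν₁₂₃' σ₁ σ₂₃ σ₁₂₃ x₁ (ν₂₃ x₂ x₃)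
        - μ₁₂₃ (mulDefect μ₁₂ ν₁₂ σ₁ σ₂ σ₁₂ x₁ x₂) (σ₃ x₃) = 0 := by
  intro x₁ x₂ x₃
  simp only [mulDefect, map_sub, LinearMap.sub_apply, hμ, hν]
  abel

section RotaBaxter

variable {A M Ah Mh : Type*}
    [AddCommGroup A] [Module K A] [AddCommGroup M] [Module K M]
    [AddCommGroup Ah] [Module K Ah] [AddCommGroup Mh] [Module K Mh]

def opDefect (Rh : Mh →ₗ[K] Ah) (R : M →ₗ[K] A) (s : A → Ah) (ss : M → Mh) (m : M) : Ah :=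
  Rh (ss m) - s (R m)

theorem map_opDefect_eq_zero {Rh : Mh →ₗ[K] Ah} {R : M →ₗ[K] A} {p : Ah →ₗ[K] A}
    {pp : Mh →ₗ[K] M} {s : A → Ah} {ss : M → Mh} (hpR : ∀ v, p (Rh v) = R (pp v))
    (hs : ∀ a, p (s a) = a) (hss : ∀ m, pp (ss m) = m) (m : M) :
    p (opDefect Rh R s ss m) = 0 := by
  rw [opDefect, map_sub, hpR, hss, hs, sub_self]

theorem rotaBaxter_coboundary_opDefect {mul : A →ₗ[K] A →ₗ[K] A}
    {al : A →ₗ[K] M →ₗ[K] M} {ar : M →ₗ[K] A →ₗ[K] M} {R : M →ₗ[K] A}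
    {mulh : Ah →ₗ[K] Ah →ₗ[K] Ah} {alh : Ah →ₗ[K] Mh →ₗ[K] Mh} {arh : Mh →ₗ[K] Ah →ₗ[K] Mh}
    {Rh : Mh →ₗ[K] Ah} {s : A → Ah} {ss : M →ₗ[K] Mh}
    (hR : ∀ m m', mul (R m) (R m') = R (al (R m) m' + ar m (R m')))
    (hRh : ∀ v v', mulh (Rh v) (Rh v') = Rh (alh (Rh v) v' + arh v (Rh v'))) (m₁ m₂ : M) :
    (mulh (s (R m₁)) (opDefect Rh R s ss m₂) - Rh (arh (ss m₁) (opDefect Rh R s ss m₂)))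
        - opDefect Rh R s ss (al (R m₁) m₂ + ar m₁ (R m₂))
        + (mulh (opDefect Rh R s ss m₁) (s (R m₂)) - Rh (alh (opDefect Rh R s ss m₁) (ss m₂)))
        + (mulDefect mulh mul s s s (R m₁) (R m₂) - Rh (mulDefect alh al s ss ss (R m₁) m₂)
          - Rh (mulDefect arh ar ss s ss m₁ (R m₂)))
      = -mulh (opDefect Rh R s ss m₁) (opDefect Rh R s ss m₂) := by
  have hRh₁₂ := hRh (ss m₁) (ss m₂)
  rw [map_add] at hRh₁₂
  simp only [opDefect, mulDefect, ← hR, map_sub, map_add, LinearMap.sub_apply]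
  rw [hRh₁₂]
  abel

end RotaBaxter

end

theorem two_cocycle_of_abelian_extension_general
    {K : Type*} [Field K] {A M B Ah Mh : Type*}
    [AddCommGroup A] [Module K A] [AddCommGroup M] [Module K M]
    [AddCommGroup B] [Module K B]
    [AddCommGroup Ah] [Module K Ah] [AddCommGroup Mh] [Module K Mh]
    -- the base relative Rota-Baxter algebra M →ᴿ A
    (mul : A →ₗ[K] A →ₗ[K] A)
    (hmul : ∀ a b c : A, mul (mul a b) c = mul a (mul b c))
    (al : A →ₗ[K] M →ₗ[K] M) (ar : M →ₗ[K] A →ₗ[K] M)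
    (hal : ∀ (a b : A) (m : M), al (mul a b) m = al a (al b m))
    (halr : ∀ (a : A) (m : M) (b : A), ar (al a m) b = al a (ar m b))
    (har : ∀ (m : M) (a b : A), ar (ar m a) b = ar m (mul a b))
    (R : M →ₗ[K] A)
    (hR : ∀ m m' : M, mul (R m) (R m') = R (al (R m) m' + ar m (R m')))
    -- the relative Rota-Baxter algebra M̂ →^{R̂} Â
    (mulh : Ah →ₗ[K] Ah →ₗ[K] Ah)
    (hmulh : ∀ x y z : Ah, mulh (mulh x y) z = mulh x (mulh y z))
    (alh : Ah →ₗ[K] Mh →ₗ[K] Mh) (arh : Mh →ₗ[K] Ah →ₗ[K] Mh)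
    (halh : ∀ (x y : Ah) (v : Mh), alh (mulh x y) v = alh x (alh y v))
    (halrh : ∀ (x : Ah) (v : Mh) (y : Ah), arh (alh x v) y = alh x (arh v y))
    (harh : ∀ (v : Mh) (x y : Ah), arh (arh v x) y = arh v (mulh x y))
    (Rh : Mh →ₗ[K] Ah)
    (hRh : ∀ v v' : Mh, mulh (Rh v) (Rh v') = Rh (alh (Rh v) v' + arh v (Rh v')))
    -- the short exact sequences 0 → N → M̂ → M → 0 and 0 → B → Â → A → 0
    (i : B →ₗ[K] Ah) (p : Ah →ₗ[K] A) (pp : Mh →ₗ[K] M)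
    (hexA : ∀ x : Ah, p x = 0 ↔ x ∈ Set.range i)
    -- the projections form a morphism of relative Rota-Baxter algebras
    (hpR : ∀ v : Mh, p (Rh v) = R (pp v))
    -- the inclusions form a morphism from the trivial relative Rota-Baxter
    -- algebra N →ˢ B
    (hitriv : ∀ b b' : B, mulh (i b) (i b') = 0)
    -- a section (s, s̄)
    (s : A →ₗ[K] Ah) (ss : M →ₗ[K] Mh)
    (hs : ∀ a : A, p (s a) = a) (hss : ∀ m : M, pp (ss m) = m)
    -- the 2-cochain (α, β, γ) defined by the section (written inside Â and M̂)
    (alphah : A → A → Ah)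
    (halphah : ∀ a a' : A, alphah a a' = mulh (s a) (s a') - s (mul a a'))
    (betaAMh : A → M → Mh)
    (hbetaAMh : ∀ (a : A) (m : M), betaAMh a m = alh (s a) (ss m) - ss (al a m))
    (betaMAh : M → A → Mh)
    (hbetaMAh : ∀ (m : M) (a : A), betaMAh m a = arh (ss m) (s a) - ss (ar m a))
    (gammah : M → Ah)
    (hgammah : ∀ m : M, gammah m = Rh (ss m) - s (R m)) :
    -- δ_rRB(α, β, γ) = 0
    (∀ a₁ a₂ a₃ : A,
      mulh (s a₁) (alphah a₂ a₃) - alphah (mul a₁ a₂) a₃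
        + alphah a₁ (mul a₂ a₃) - mulh (alphah a₁ a₂) (s a₃) = 0) ∧
    (∀ (m : M) (a₂ a₃ : A),
      arh (ss m) (alphah a₂ a₃) - betaMAh (ar m a₂) a₃
        + betaMAh m (mul a₂ a₃) - arh (betaMAh m a₂) (s a₃) = 0) ∧
    (∀ (a₁ : A) (m : M) (a₃ : A),
      alh (s a₁) (betaMAh m a₃) - betaMAh (al a₁ m) a₃
        + betaAMh a₁ (ar m a₃) - arh (betaAMh a₁ m) (s a₃) = 0) ∧
    (∀ (a₁ a₂ : A) (m : M),
      alh (s a₁) (betaAMh a₂ m) - betaAMh (mul a₁ a₂) m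
        + betaAMh a₁ (al a₂ m) - alh (alphah a₁ a₂) (ss m) = 0) ∧
    (∀ m₁ m₂ : M,
      (mulh (s (R m₁)) (gammah m₂) - Rh (arh (ss m₁) (gammah m₂)))
        - gammah (al (R m₁) m₂ + ar m₁ (R m₂))
        + (mulh (gammah m₁) (s (R m₂)) - Rh (alh (gammah m₁) (ss m₂)))
        + (alphah (R m₁) (R m₂) - Rh (betaAMh (R m₁) m₂) - Rh (betaMAh m₁ (R m₂)))
        = 0) := by
  obtain rfl : alphah = mulDefect mulh mul s s s := funext₂ halphah
  obtain rfl : betaAMh = mulDefect alh al s ss ss := funext₂ hbetaAMh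
  obtain rfl : betaMAh = mulDefect arh ar ss s ss := funext₂ hbetaMAh
  obtain rfl : gammah = opDefect Rh R s ss := funext hgammah
  refine ⟨mulDefect_cocycle hmulh hmul, mulDefect_cocycle harh har,
    mulDefect_cocycle halrh halr, mulDefect_cocycle halh hal, fun m₁ m₂ => ?_⟩
  obtain ⟨b₁, hb₁⟩ := (hexA _).mp (map_opDefect_eq_zero hpR hs hss m₁)
  obtain ⟨b₂, hb₂⟩ := (hexA _).mp (map_opDefect_eq_zero hpR hs hss m₂)
  rw [rotaBaxter_coboundary_opDefect hR hRh, ← hb₁, ← hb₂, hitriv, neg_zero]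

/-- Given an abelian extension M̂ →^{R̂} Â of a relative Rota-Baxter algebra M →ᴿ A
by a 2-term chain complex N →ˢ B, together with a section (s, s̄), the associated
triple (α, β, γ) is a 2-cocycle: δ_rRB(α, β, γ) = 0.  (The cocycle conditions are
expressed inside Â and M̂ via the injections, using the induced bimodule structure
a ·_B b = s(a)·i(b), l(m, b) = s̄(m)·i(b), etc.) -/
theorem two_cocycle_of_abelian_extension
    {K : Type*} [Field K] {A M B N Ah Mh : Type*}
    [AddCommGroup A] [Module K A] [AddCommGroup M] [Module K M]
    [AddCommGroup B] [Module K B] [AddCommGroup N] [Module K N]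
    [AddCommGroup Ah] [Module K Ah] [AddCommGroup Mh] [Module K Mh]
    -- the base relative Rota-Baxter algebra M →ᴿ A
    (mul : A →ₗ[K] A →ₗ[K] A)
    (hmul : ∀ a b c : A, mul (mul a b) c = mul a (mul b c))
    (al : A →ₗ[K] M →ₗ[K] M) (ar : M →ₗ[K] A →ₗ[K] M)
    (hal : ∀ (a b : A) (m : M), al (mul a b) m = al a (al b m))
    (halr : ∀ (a : A) (m : M) (b : A), ar (al a m) b = al a (ar m b))
    (har : ∀ (m : M) (a b : A), ar (ar m a) b = ar m (mul a b))
    (R : M →ₗ[K] A)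
    (hR : ∀ m m' : M, mul (R m) (R m') = R (al (R m) m' + ar m (R m')))
    -- the 2-term chain complex N →ˢ B
    (S : N →ₗ[K] B)
    -- the relative Rota-Baxter algebra M̂ →^{R̂} Â
    (mulh : Ah →ₗ[K] Ah →ₗ[K] Ah)
    (hmulh : ∀ x y z : Ah, mulh (mulh x y) z = mulh x (mulh y z))
    (alh : Ah →ₗ[K] Mh →ₗ[K] Mh) (arh : Mh →ₗ[K] Ah →ₗ[K] Mh)
    (halh : ∀ (x y : Ah) (v : Mh), alh (mulh x y) v = alh x (alh y v))
    (halrh : ∀ (x : Ah) (v : Mh) (y : Ah), arh (alh x v) y = alh x (arh v y))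
    (harh : ∀ (v : Mh) (x y : Ah), arh (arh v x) y = arh v (mulh x y))
    (Rh : Mh →ₗ[K] Ah)
    (hRh : ∀ v v' : Mh, mulh (Rh v) (Rh v') = Rh (alh (Rh v) v' + arh v (Rh v')))
    -- the short exact sequences 0 → N → M̂ → M → 0 and 0 → B → Â → A → 0
    (i : B →ₗ[K] Ah) (ii : N →ₗ[K] Mh) (p : Ah →ₗ[K] A) (pp : Mh →ₗ[K] M)
    (hi : Function.Injective i) (hii : Function.Injective ii)
    (hpsur : Function.Surjective p) (hppsur : Function.Surjective pp)
    (hexA : ∀ x : Ah, p x = 0 ↔ x ∈ Set.range i)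
    (hexM : ∀ v : Mh, pp v = 0 ↔ v ∈ Set.range ii)
    -- the projections form a morphism of relative Rota-Baxter algebras
    (hp : ∀ x y : Ah, p (mulh x y) = mul (p x) (p y))
    (hpl : ∀ (x : Ah) (v : Mh), pp (alh x v) = al (p x) (pp v))
    (hpr : ∀ (v : Mh) (x : Ah), pp (arh v x) = ar (pp v) (p x))
    (hpR : ∀ v : Mh, p (Rh v) = R (pp v))
    -- the inclusions form a morphism from the trivial relative Rota-Baxter
    -- algebra N →ˢ B
    (hitriv : ∀ b b' : B, mulh (i b) (i b') = 0)
    (hitrivl : ∀ (b : B) (n : N), alh (i b) (ii n) = 0)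
    (hitrivr : ∀ (n : N) (b : B), arh (ii n) (i b) = 0)
    (hiS : ∀ n : N, Rh (ii n) = i (S n))
    -- a section (s, s̄)
    (s : A →ₗ[K] Ah) (ss : M →ₗ[K] Mh)
    (hs : ∀ a : A, p (s a) = a) (hss : ∀ m : M, pp (ss m) = m)
    -- the 2-cochain (α, β, γ) defined by the section (written inside Â and M̂)
    (alphah : A → A → Ah)
    (halphah : ∀ a a' : A, alphah a a' = mulh (s a) (s a') - s (mul a a'))
    (betaAMh : A → M → Mh)
    (hbetaAMh : ∀ (a : A) (m : M), betaAMh a m = alh (s a) (ss m) - ss (al a m))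
    (betaMAh : M → A → Mh)
    (hbetaMAh : ∀ (m : M) (a : A), betaMAh m a = arh (ss m) (s a) - ss (ar m a))
    (gammah : M → Ah)
    (hgammah : ∀ m : M, gammah m = Rh (ss m) - s (R m)) :
    -- δ_rRB(α, β, γ) = 0
    (∀ a₁ a₂ a₃ : A,
      mulh (s a₁) (alphah a₂ a₃) - alphah (mul a₁ a₂) a₃
        + alphah a₁ (mul a₂ a₃) - mulh (alphah a₁ a₂) (s a₃) = 0) ∧
    (∀ (m : M) (a₂ a₃ : A),
      arh (ss m) (alphah a₂ a₃) - betaMAh (ar m a₂) a₃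
        + betaMAh m (mul a₂ a₃) - arh (betaMAh m a₂) (s a₃) = 0) ∧
    (∀ (a₁ : A) (m : M) (a₃ : A),
      alh (s a₁) (betaMAh m a₃) - betaMAh (al a₁ m) a₃
        + betaAMh a₁ (ar m a₃) - arh (betaAMh a₁ m) (s a₃) = 0) ∧
    (∀ (a₁ a₂ : A) (m : M),
      alh (s a₁) (betaAMh a₂ m) - betaAMh (mul a₁ a₂) m
        + betaAMh a₁ (al a₂ m) - alh (alphah a₁ a₂) (ss m) = 0) ∧
    (∀ m₁ m₂ : M,
      (mulh (s (R m₁)) (gammah m₂) - Rh (arh (ss m₁) (gammah m₂)))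
        - gammah (al (R m₁) m₂ + ar m₁ (R m₂))
        + (mulh (gammah m₁) (s (R m₂)) - Rh (alh (gammah m₁) (ss m₂)))
        + (alphah (R m₁) (R m₂) - Rh (betaAMh (R m₁) m₂) - Rh (betaMAh m₁ (R m₂)))
        = 0) :=
  two_cocycle_of_abelian_extension_general mul hmul al ar hal halr har R hR mulh hmulh alh arh halh
    halrh harh Rh hRh i p pp hexA hpR hitriv s ss hs hss alphah halphah betaAMh hbetaAMh betaMAh
    hbetaMAh gammah hgammah
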